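/- arXiv:2204.11771 — 3 statements merged into one kernel-verified Lean document; each statement's English description precedes it below -/
import Mathlib

section
/- Let I be a linear order with 0, E a set with ⊥, and let a, a', b, b' be positive-support functions I → E with a ∼ a', b ∼ b' (equal lengths and finitely many differences). Assume maxdiff_k(a',b') is defined for every k ≥ 1 (the k-th largest index of difference, or 0 if fewer than k differences). Then maxdiff(a,b) is defined: either a = b, or the set {i | a(i) ≠ b(i)} has a maximum element. -/
/-- `a : I → E` is a positive-support function with length `l`. -/
def IsPosSupport {I E : Type*} [LinearOrder I] (z : I) (bot : E)
    (a : I → E) (l : I) : Prop :=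
  z ≤ l ∧ ∀ j, a j ≠ bot ↔ (z ≤ j ∧ j ≤ l)

/-- If `a ∼ a'`, `b ∼ b'` (equal lengths and finitely many differences) and for every
`k ≥ 1` the `k`-th largest index where `a'` and `b'` differ is defined (i.e. either the
set of differences has a `k`-th largest element or it is finite with fewer than `k`
elements, in which case the convention is that `maxdiff_k` is `0`), then `maxdiff(a,b)`
is defined: either `a = b` or the set of indices where `a`, `b` differ has a maximum. -/
theorem maxdiff_defined_of_sim {I E : Type*} [LinearOrder I] (z : I) (bot : E)
    (a a' b b' : I → E) (la la' lb lb' : I)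
    (ha : IsPosSupport z bot a la) (ha' : IsPosSupport z bot a' la')
    (hb : IsPosSupport z bot b lb) (hb' : IsPosSupport z bot b' lb')
    (hsima : la = la' ∧ {i : I | a i ≠ a' i}.Finite)
    (hsimb : lb = lb' ∧ {i : I | b i ≠ b' i}.Finite)
    (hdiff : ∀ k : ℕ, 1 ≤ k →
      (∃ d : I, (a' d ≠ b' d) ∧ {i : I | (a' i ≠ b' i) ∧ d < i}.Finite ∧
          {i : I | (a' i ≠ b' i) ∧ d < i}.ncard + 1 = k) ∨
      ({i : I | a' i ≠ b' i}.Finite ∧ {i : I | a' i ≠ b' i}.ncard < k)) :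
    a = b ∨ ∃ d, IsGreatest {i : I | a i ≠ b i} d := by
  obtain ⟨-, hfa⟩ := hsima
  obtain ⟨-, hfb⟩ := hsimb
  set F : Set I := {i | a i ≠ a' i} ∪ {i | b i ≠ b' i} with hF
  have hFfin : F.Finite := hfa.union hfb
  rcases hdiff (F.ncard + 1) (by omega) with ⟨d, hd, htfin, hcard⟩ | ⟨hfin, hlt⟩
  · right
    set T := {i : I | (a' i ≠ b' i) ∧ d < i} with hT
    have hdT : d ∉ T := fun h => lt_irrefl d h.2
    have hS : (insert d T).ncard = F.ncard + 1 := by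
      rw [Set.ncard_insert_of_notMem hdT htfin]; omega
    have hns : ¬ insert d T ⊆ F := by
      intro h
      have := Set.ncard_le_ncard h hFfin
      omega
    obtain ⟨x, hxS, hxF⟩ := Set.not_subset.mp hns
    have hxab : a x ≠ b x ∧ d ≤ x := by
      have h1 : a x = a' x := by
        by_contra h; exact hxF (Set.mem_union_left _ h)
      have h2 : b x = b' x := by
        by_contra h; exact hxF (Set.mem_union_right _ h)
      rcases Set.mem_insert_iff.mp hxS with rfl | hxT
      · exact ⟨by rw [h1, h2]; exact hd, le_refl _⟩
      · exact ⟨by rw [h1, h2]; exact hxT.1, le_of_lt hxT.2⟩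
    set G := {i : I | a i ≠ b i ∧ d ≤ i} with hG
    have hGsub : G ⊆ insert d T ∪ F := by
      rintro i ⟨hi, hdi⟩
      by_cases hiF : i ∈ F
      · exact Or.inr hiF
      · have h1 : a i = a' i := by
          by_contra h; exact hiF (Set.mem_union_left _ h)
        have h2 : b i = b' i := by
          by_contra h; exact hiF (Set.mem_union_right _ h)
        have hab' : a' i ≠ b' i := by rw [← h1, ← h2]; exact hi
        rcases eq_or_lt_of_le hdi with rfl | hlt
        · exact Or.inl (Set.mem_insert _ _)
        · exact Or.inl (Set.mem_insert_of_mem _ ⟨hab', hlt⟩)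
    have hGfin : G.Finite := ((htfin.insert d).union hFfin).subset hGsub
    have hGne : G.Nonempty := ⟨x, hxab⟩
    obtain ⟨M, hMG, hMmax⟩ := Set.Finite.exists_maximalFor id G hGfin hGne
    refine ⟨M, hMG.1, fun y hy => ?_⟩
    by_cases hdy : d ≤ y
    · have hyG : y ∈ G := ⟨hy, hdy⟩
      by_contra h
      exact absurd (le_antisymm (le_of_lt (not_le.mp h)) (hMmax hyG (le_of_lt (not_le.mp h)))) (ne_of_lt (not_le.mp h))
    · exact le_trans (le_of_not_ge hdy) hMG.2
  · have hsub : {i : I | a i ≠ b i} ⊆ {i : I | a' i ≠ b' i} ∪ F := by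
      intro i hi
      by_cases hiF : i ∈ F
      · exact Or.inr hiF
      · have h1 : a i = a' i := by
          by_contra h; exact hiF (Set.mem_union_left _ h)
        have h2 : b i = b' i := by
          by_contra h; exact hiF (Set.mem_union_right _ h)
        exact Or.inl (Set.mem_setOf.mpr (by rw [← h1, ← h2]; exact hi))
    have hfin2 : {i : I | a i ≠ b i}.Finite := (hfin.union hFfin).subset hsub
    rcases Set.eq_empty_or_nonempty {i : I | a i ≠ b i} with he | hne
    · left
      funext i
      by_contra h
      have : i ∈ {i : I | a i ≠ b i} := h
      rw [he] at this
      exact this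
    · right
      obtain ⟨M, hMG, hMmax⟩ := Set.Finite.exists_maximalFor id _ hfin2 hne
      refine ⟨M, hMG, fun y hy => ?_⟩
      by_contra h
      exact absurd (le_antisymm (le_of_lt (not_le.mp h)) (hMmax hy (le_of_lt (not_le.mp h)))) (ne_of_lt (not_le.mp h))
end

section
/- Let M ⊆ N be models of the theory of contiguous extensional arrays (i.e., M is a substructure of N with respect to rd, wr, length, and the index structure), with functional interpretations as positive-support functions. For a, b in ARRAY^M, define a ∼_M b iff |a| = |b| in M and {i ∈ INDEX^M | rd(a,i) ≠ rd(b,i)} is finite (and similarly ∼_N using indices from N). Then a ∼_M b if and only if a ∼_N b. -/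
/-- A three-sorted structure for the theory of contiguous arrays: an index sort with
an ordering and a zero, an element sort with `⊥`, an array sort with read, write and
length operations. -/
structure ArrModel where
  Index : Type
  Elem : Type
  Arr : Type
  le : Index → Index → Prop
  zero : Index
  bot : Elem
  rd : Arr → Index → Elem
  wr : Arr → Index → Elem → Arr
  len : Arr → Index

/-- The axioms of the theory of contiguous extensional arrays. -/
structure ArrModel.IsModel (M : ArrModel) : Prop where
  le_refl : ∀ i, M.le i i
  le_trans : ∀ i j k, M.le i j → M.le j k → M.le i k
  le_antisymm : ∀ i j, M.le i j → M.le j i → i = j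
  le_total : ∀ i j, M.le i j ∨ M.le j i
  len_wr : ∀ a i e, M.len (M.wr a i e) = M.len a
  wr_bot : ∀ a i, M.wr a i M.bot = a
  rd_wr_eq : ∀ a i e, e ≠ M.bot → M.le M.zero i → M.le i (M.len a) →
    M.rd (M.wr a i e) i = e
  rd_wr_ne : ∀ a i j e, i ≠ j → M.rd (M.wr a i e) j = M.rd a j
  rd_bot : ∀ a i, M.rd a i ≠ M.bot ↔ (M.le M.zero i ∧ M.le i (M.len a))
  len_nonneg : ∀ a, M.le M.zero (M.len a)
  ext : ∀ a b, a ≠ b → ∃ i, M.rd a i ≠ M.rd b i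

/-- An embedding of array structures (so its image is a substructure): injective on all
sorts, preserving and reflecting the order and preserving `0`, `⊥`, `rd`, `wr`, `len`. -/
structure ArrModel.Emb (M N : ArrModel) where
  fi : M.Index → N.Index
  fe : M.Elem → N.Elem
  fa : M.Arr → N.Arr
  fi_inj : Function.Injective fi
  fe_inj : Function.Injective fe
  fa_inj : Function.Injective fa
  le_iff : ∀ i j, N.le (fi i) (fi j) ↔ M.le i j
  map_zero : fi M.zero = N.zero
  map_bot : fe M.bot = N.bot
  map_rd : ∀ a i, N.rd (fa a) (fi i) = fe (M.rd a i)
  map_wr : ∀ a i e, fa (M.wr a i e) = N.wr (fa a) (fi i) (fe e)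
  map_len : ∀ a, N.len (fa a) = fi (M.len a)

/-! If `|a| = |b|` and `a`, `b` differ at finitely many indices `i₁, …, iₙ` of `M`, then
`b` is obtained from `a` by writing `rd(b, iₖ)` at each `iₖ`. Writes are preserved by the
embedding, so the images of `a` and `b` in `N` differ at most at the images of the `iₖ`.
Conversely, the embedding preserves and reflects reads, so a difference of `a` and `b` in
`M` is also one of their images in `N`. -/

namespace ArrModel

variable {M N : ArrModel}

theorem IsModel.eq_of_rd_eq (hM : M.IsModel) {a b : M.Arr} (h : ∀ i, M.rd a i = M.rd b i) :
    a = b := by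
  by_contra hne
  obtain ⟨i, hi⟩ := hM.ext a b hne
  exact hi (h i)

theorem IsModel.rd_ne_bot_of_len_eq (hM : M.IsModel) {a b : M.Arr} {i : M.Index}
    (hlen : M.len a = M.len b) (ha : M.rd a i ≠ M.bot) : M.rd b i ≠ M.bot := by
  rw [hM.rd_bot, ← hlen]
  exact (hM.rd_bot a i).1 ha

/-- When `rd(b, i) = ⊥` the write is the identity, and `rd(a, i) = ⊥` too since arrays of
equal length have the same support. -/
theorem IsModel.rd_wr_rd_self (hM : M.IsModel) {a b : M.Arr} (hlen : M.len a = M.len b)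
    (i : M.Index) : M.rd (M.wr a i (M.rd b i)) i = M.rd b i := by
  by_cases hb : M.rd b i = M.bot
  · rw [hb, hM.wr_bot]
    by_contra ha
    exact hM.rd_ne_bot_of_len_eq hlen ha hb
  · obtain ⟨h0, hi⟩ := (hM.rd_bot b i).1 hb
    exact hM.rd_wr_eq a i _ hb h0 (hlen ▸ hi)

namespace Emb

theorem len_eq_iff (f : M.Emb N) {a b : M.Arr} :
    N.len (f.fa a) = N.len (f.fa b) ↔ M.len a = M.len b := by
  rw [f.map_len, f.map_len, f.fi_inj.eq_iff]

theorem preimage_rd_ne (f : M.Emb N) (a b : M.Arr) :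
    f.fi ⁻¹' {j | N.rd (f.fa a) j ≠ N.rd (f.fa b) j} = {i | M.rd a i ≠ M.rd b i} := by
  ext i
  simp only [Set.mem_preimage, Set.mem_ofPred_eq, f.map_rd, f.fe_inj.ne_iff]

theorem rd_eq_of_forall_ne_fi (hM : M.IsModel) (hN : N.IsModel) (f : M.Emb N)
    (s : Finset M.Index) {a b : M.Arr} (hlen : M.len a = M.len b)
    (hab : ∀ i ∉ s, M.rd a i = M.rd b i) {j : N.Index} (hj : ∀ i ∈ s, j ≠ f.fi i) :
    N.rd (f.fa a) j = N.rd (f.fa b) j := by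
  classical
  induction s using Finset.induction generalizing a with
  | empty => rw [hM.eq_of_rd_eq fun i => hab i (Finset.notMem_empty i)]
  | @insert i t _ ih =>
    set a' := M.wr a i (M.rd b i)
    have ha'b : ∀ k ∉ t, M.rd a' k = M.rd b k := by
      intro k hk
      by_cases hik : i = k
      · exact hik ▸ hM.rd_wr_rd_self hlen i
      · rw [hM.rd_wr_ne a i k _ hik]
        exact hab k (by simp [Ne.symm hik, hk])
    have ha' : N.rd (f.fa a') j = N.rd (f.fa a) j := by
      rw [f.map_wr]
      exact hN.rd_wr_ne _ _ _ _ (hj i (Finset.mem_insert_self i t)).symm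
    rw [← ha']
    exact ih ((hM.len_wr a i _).trans hlen) ha'b
      fun k hk => hj k (Finset.mem_insert_of_mem hk)

theorem rd_ne_subset_image (hM : M.IsModel) (hN : N.IsModel) (f : M.Emb N) {a b : M.Arr}
    (hlen : M.len a = M.len b) (hfin : {i | M.rd a i ≠ M.rd b i}.Finite) :
    {j | N.rd (f.fa a) j ≠ N.rd (f.fa b) j} ⊆ f.fi '' {i | M.rd a i ≠ M.rd b i} := by
  intro j hj
  by_contra hjs
  refine hj (f.rd_eq_of_forall_ne_fi hM hN hfin.toFinset hlen (fun i hi => ?_) ?_)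
  · simpa using hi
  · rintro i hi rfl
    exact hjs ⟨i, by simpa using hi, rfl⟩

end Emb

end ArrModel

/-- Cardinality equivalence `∼` between arrays (equal lengths and finitely many indices
where the reads differ) is invariant when passing from a substructure `M` to a
superstructure `N` of models of the contiguous extensional array theory. -/
theorem sim_iff_sim_of_substructure (M N : ArrModel)
    (hM : M.IsModel) (hN : N.IsModel) (f : M.Emb N) (a b : M.Arr) :
    (M.len a = M.len b ∧ {i : M.Index | M.rd a i ≠ M.rd b i}.Finite) ↔
    (N.len (f.fa a) = N.len (f.fa b) ∧
      {i : N.Index | N.rd (f.fa a) i ≠ N.rd (f.fa b) i}.Finite) := by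
  constructor
  · rintro ⟨hlen, hfin⟩
    exact ⟨f.len_eq_iff.2 hlen, (hfin.image f.fi).subset (f.rd_ne_subset_image hM hN hlen hfin)⟩
  · rintro ⟨hlen, hfin⟩
    refine ⟨f.len_eq_iff.1 hlen, ?_⟩
    rw [← f.preimage_rd_ne]
    exact hfin.preimage f.fi_inj.injOn
end

section
/- Let I be a linear order with 0, E a set with distinguished elements ⊥ and el (⊥ ≠ el), e ∈ E with e ∉ {⊥, el}. Let a, b : I → E be positive-support with |a| = |b| = L, let D = {i | a(i) ≠ b(i)} be infinite with no maximum, and let I' = I ∪ {k₀} be the linear order obtained by inserting a new point k₀ above ↓D and below I \ ↓D. Extend a to a' : I' → E by a'(k₀) = e and b to b' by b'(k₀) = el (and values unchanged on I). Then a', b' are positive-support in I' with the same lengths (note k₀ < L since D ⊆ [0,L]), and maxdiff(a',b') exists and equals k₀. -/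
/-- `a : I → E` is a positive-support function with length `l` (relative to the
distinguished zero `z` of `I` and the undefined value `bot`). -/
def IsPosSupportAt {I E : Type*} [LinearOrder I] (z : I) (bot : E)
    (a : I → E) (l : I) : Prop :=
  z ≤ l ∧ ∀ j, a j ≠ bot ↔ (z ≤ j ∧ j ≤ l)

namespace IsPosSupportAt

variable {I E : Type*} [LinearOrder I] {z : I} {bot : E} {l : I}

theorem mem_Icc_of_ne {a b : I → E} (ha : IsPosSupportAt z bot a l)
    (hb : IsPosSupportAt z bot b l) {d : I} (hd : a d ≠ b d) : d ∈ Set.Icc z l := by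
  by_cases had : a d = bot
  · exact (hb.2 d).1 fun hbd => hd (had.trans hbd.symm)
  · exact (ha.2 d).1 had

theorem extend {I' : Type*} [LinearOrder I'] {c : I → E} (hc : IsPosSupportAt z bot c l)
    (μ : I ↪o I') {k₀ : I'} (hzk : μ z < k₀) (hkl : k₀ < μ l)
    (hcover : ∀ j : I', j = k₀ ∨ ∃ i : I, j = μ i)
    {c' : I' → E} (hcμ : ∀ i, c' (μ i) = c i) (hck : c' k₀ ≠ bot) :
    IsPosSupportAt (μ z) bot c' (μ l) := by
  refine ⟨μ.monotone hc.1, fun j => ?_⟩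
  rcases hcover j with rfl | ⟨i, rfl⟩
  · simp [hck, hzk.le, hkl.le]
  · simp [hcμ, hc.2 i, μ.le_iff_le]

end IsPosSupportAt

theorem insert_point_maxdiff_general {I I' E : Type*} [LinearOrder I] [LinearOrder I']
    (z : I) (bot el e : E)
    (hbe : e ≠ bot) (hee : e ≠ el) (helb : el ≠ bot)
    (a b : I → E) (L : I)
    (ha : IsPosSupportAt z bot a L) (hb : IsPosSupportAt z bot b L)
    (hinf : {i : I | a i ≠ b i}.Infinite)
    (hnomax : ∀ d, a d ≠ b d → ∃ d', a d' ≠ b d' ∧ d < d')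
    (μ : I ↪o I') (k₀ : I')
    (hbelow : ∀ i : I, (∃ d, a d ≠ b d ∧ i ≤ d) → μ i < k₀)
    (habove : ∀ i : I, ¬ (∃ d, a d ≠ b d ∧ i ≤ d) → k₀ < μ i)
    (hcover : ∀ j : I', j = k₀ ∨ ∃ i : I, j = μ i)
    (a' b' : I' → E)
    (ha'μ : ∀ i : I, a' (μ i) = a i) (ha'k : a' k₀ = e)
    (hb'μ : ∀ i : I, b' (μ i) = b i) (hb'k : b' k₀ = el) :
    IsPosSupportAt (μ z) bot a' (μ L) ∧ IsPosSupportAt (μ z) bot b' (μ L) ∧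
    IsGreatest {j : I' | a' j ≠ b' j} k₀ := by
  obtain ⟨d, hd⟩ := hinf.nonempty
  have hzk : μ z < k₀ := hbelow z ⟨d, hd, (ha.mem_Icc_of_ne hb hd).1⟩
  -- A difference point above `L` would lie outside the common support.
  have hkL : k₀ < μ L := habove L fun ⟨d', hd', hLd'⟩ => by
    obtain ⟨d'', hd'', hd'd''⟩ := hnomax d' hd'
    exact (hLd'.trans_lt hd'd'').not_ge (ha.mem_Icc_of_ne hb hd'').2
  refine ⟨ha.extend μ hzk hkL hcover ha'μ (ha'k ▸ hbe),
    hb.extend μ hzk hkL hcover hb'μ (hb'k ▸ helb), by simp [ha'k, hb'k, hee], ?_⟩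
  rintro j (hj : a' j ≠ b' j)
  rcases hcover j with rfl | ⟨i, rfl⟩
  · exact le_rfl
  · rw [ha'μ, hb'μ] at hj
    exact (hbelow i ⟨i, hj, le_rfl⟩).le

/-- Inserting a point `k₀` above the downward closure of the (infinite, maximumless)
difference set `D` of two positive-support functions `a`, `b` of the same length `L`,
and extending `a` by `e` and `b` by `el` at `k₀`, yields positive-support functions
`a'`, `b'` of the same lengths whose maxdiff exists and equals `k₀`. -/
theorem insert_point_maxdiff {I I' E : Type*} [LinearOrder I] [LinearOrder I']
    (z : I) (bot el e : E)
    (hbe : e ≠ bot) (hee : e ≠ el) (helb : el ≠ bot)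
    (a b : I → E) (L : I)
    (ha : IsPosSupportAt z bot a L) (hb : IsPosSupportAt z bot b L)
    (hinf : {i : I | a i ≠ b i}.Infinite)
    (hnomax : ∀ d, a d ≠ b d → ∃ d', a d' ≠ b d' ∧ d < d')
    (μ : I ↪o I') (k₀ : I')
    (hk₀ : k₀ ∉ Set.range μ)
    (hbelow : ∀ i : I, (∃ d, a d ≠ b d ∧ i ≤ d) → μ i < k₀)
    (habove : ∀ i : I, ¬ (∃ d, a d ≠ b d ∧ i ≤ d) → k₀ < μ i)
    (hcover : ∀ j : I', j = k₀ ∨ ∃ i : I, j = μ i)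
    (a' b' : I' → E)
    (ha'μ : ∀ i : I, a' (μ i) = a i) (ha'k : a' k₀ = e)
    (hb'μ : ∀ i : I, b' (μ i) = b i) (hb'k : b' k₀ = el) :
    IsPosSupportAt (μ z) bot a' (μ L) ∧ IsPosSupportAt (μ z) bot b' (μ L) ∧
    IsGreatest {j : I' | a' j ≠ b' j} k₀ :=
  insert_point_maxdiff_general z bot el e hbe hee helb a b L ha hb hinf hnomax μ k₀ hbelow habove
    hcover a' b' ha'μ ha'k hb'μ hb'k
end
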